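/- Let k be a field of characteristic not equal to 2 and A a finite-dimensional unital associative k-algebra. Let r ∈ A⊗A be skew-symmetric, i.e. σ(r) = −r. Then r12·r13 + r13·r23 − r23·r12 = 0 in A⊗A⊗A if and only if F_r(a*)·F_r(b*) = F_r(R*(F_r(a*))b* + a* L*(F_r(b*))) for all a*, b* ∈ A*, i.e. F_r : A* → A is an O-operator of weight zero associated to the dual bimodule (A*,R*,L*). -/

import Mathlib

open TensorProduct

/-- `r ↦ r₁₂ = Σ aᵢ ⊗ bᵢ ⊗ 1` in `A ⊗ (A ⊗ A)`. -/
noncomputable def e12 (k A : Type) [Field k] [Ring A] [Algebra k A] :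
    A ⊗[k] A →ₗ[k] A ⊗[k] (A ⊗[k] A) :=
  TensorProduct.map LinearMap.id ((TensorProduct.mk k A A).flip 1)

/-- `r ↦ r₁₃ = Σ aᵢ ⊗ 1 ⊗ bᵢ` in `A ⊗ (A ⊗ A)`. -/
noncomputable def e13 (k A : Type) [Field k] [Ring A] [Algebra k A] :
    A ⊗[k] A →ₗ[k] A ⊗[k] (A ⊗[k] A) :=
  TensorProduct.map LinearMap.id (TensorProduct.mk k A A 1)

/-- `r ↦ r₂₃ = Σ 1 ⊗ aᵢ ⊗ bᵢ` in `A ⊗ (A ⊗ A)`. -/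
noncomputable def e23 (k A : Type) [Field k] [Ring A] [Algebra k A] :
    A ⊗[k] A →ₗ[k] A ⊗[k] (A ⊗[k] A) :=
  TensorProduct.mk k A (A ⊗[k] A) 1

/-- For `r ∈ A ⊗ A`, the induced map `F_r : A* → A`, characterized by
`b*(F_r(a*)) = (a* ⊗ b*)(r)`. -/
noncomputable def Fr {k A : Type} [Field k] [AddCommGroup A] [Module k A]
    (r : A ⊗[k] A) (f : Module.Dual k A) : A :=
  TensorProduct.lid k A (LinearMap.rTensor A f r)

/-! Contracting the first two legs of `t ∈ A ⊗ A ⊗ A` against `a*, b* ∈ A*` detects `t = 0` when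
`A` is finite-dimensional. On the three terms of the associative Yang–Baxter expression these
contractions give `F_r(a*) F_r(b*)` for `r₁₃ r₂₃`, `F_r(R*(F_r a*) b*)` for `r₂₃ r₁₂`, and, after
using `σ(r) = -r`, `-F_r(a* L*(F_r b*))` for `r₁₂ r₁₃`; so the equation holds iff `F_r` is an
O-operator. -/

namespace LinearMap

theorem mulLeft_add {R A : Type*} [Semiring R] [NonUnitalNonAssocSemiring A] [Module R A]
    [SMulCommClass R A A] (x y : A) : mulLeft R (x + y) = mulLeft R x + mulLeft R y :=
  ext (add_mul x y)

theorem mulLeft_neg {R A : Type*} [Semiring R] [NonUnitalNonAssocRing A] [Module R A]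
    [SMulCommClass R A A] (x : A) : mulLeft R (-x) = -mulLeft R x :=
  ext (neg_mul x)

end LinearMap

section Contraction

variable {R A : Type*} [CommSemiring R] [AddCommMonoid A] [Module R A]

variable (M : Type*) [AddCommMonoid M] [Module R M] in
noncomputable def contractFst : Module.Dual R A →ₗ[R] A ⊗[R] M →ₗ[R] M :=
  LinearMap.llcomp R _ _ _ (TensorProduct.lid R M).toLinearMap ∘ₗ LinearMap.rTensorHom M

variable {M : Type*} [AddCommMonoid M] [Module R M]

@[simp]
lemma contractFst_tmul (f : Module.Dual R A) (x : A) (m : M) :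
    contractFst M f (x ⊗ₜ m) = f x • m := by
  simp [contractFst]

lemma dualTensorHom_rTensor_evalEquiv [Module.Free R A] [Module.Finite R A] (t : A ⊗[R] M) :
    dualTensorHom R (Module.Dual R A) M ((Module.evalEquiv R A).rTensor M t) =
      (contractFst M).flip t := by
  induction t using TensorProduct.induction_on with
  | zero => simp
  | tmul x m => ext f; simp
  | add x y hx hy => simp only [map_add, hx, hy]

lemma forall_contractFst_eq_zero_iff [Module.Free R A] [Module.Finite R A] {t : A ⊗[R] M} :
    (∀ f, contractFst M f t = 0) ↔ t = 0 := by
  refine ⟨fun h => ?_, fun h f => by rw [h, map_zero]⟩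
  rw [← (Module.evalEquiv R A).rTensor M |>.map_eq_zero_iff,
    ← (dualTensorHomEquiv R (Module.Dual R A) M).map_eq_zero_iff]
  exact (dualTensorHom_rTensor_evalEquiv t).trans (LinearMap.ext h)

end Contraction

section YangBaxter

variable {k A : Type} [Field k] [Ring A] [Algebra k A]

lemma Fr_eq_contractFst (r : A ⊗[k] A) (f : Module.Dual k A) : Fr r f = contractFst A f r := rfl

variable (a b : Module.Dual k A)

lemma contractFst_e12_mul_e13 (r s : A ⊗[k] A) :
    contractFst A b (contractFst (A ⊗[k] A) a (e12 k A r * e13 k A s)) =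
      Fr s (a ∘ₗ LinearMap.mulLeft k (Fr (TensorProduct.comm k A A r) b)) := by
  simp only [Fr_eq_contractFst]
  induction r using TensorProduct.induction_on with
  | zero => simp
  | add r₁ r₂ h₁ h₂ => simp [add_mul, h₁, h₂, LinearMap.mulLeft_add, LinearMap.comp_add]
  | tmul x y =>
    induction s using TensorProduct.induction_on with
    | zero => simp
    | add s₁ s₂ h₁ h₂ => simp [mul_add, h₁, h₂]
    | tmul u v =>
      simp [e12, e13, smul_smul, mul_comm]

lemma contractFst_e13_mul_e23 (r s : A ⊗[k] A) :
    contractFst A b (contractFst (A ⊗[k] A) a (e13 k A r * e23 k A s)) = Fr r a * Fr s b := by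
  simp only [Fr_eq_contractFst]
  induction r using TensorProduct.induction_on with
  | zero => simp
  | add r₁ r₂ h₁ h₂ => simp [add_mul, h₁, h₂]
  | tmul x y =>
    induction s using TensorProduct.induction_on with
    | zero => simp
    | add s₁ s₂ h₁ h₂ => simp [mul_add, h₁, h₂]
    | tmul u v =>
      simp [e13, e23, smul_smul, mul_comm]

lemma contractFst_e23_mul_e12 (r s : A ⊗[k] A) :
    contractFst A b (contractFst (A ⊗[k] A) a (e23 k A r * e12 k A s)) =
      Fr r (b ∘ₗ LinearMap.mulRight k (Fr s a)) := by
  simp only [Fr_eq_contractFst]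
  induction r using TensorProduct.induction_on with
  | zero => simp
  | add r₁ r₂ h₁ h₂ => simp [add_mul, h₁, h₂]
  | tmul x y =>
    induction s using TensorProduct.induction_on with
    | zero => simp
    | add s₁ s₂ h₁ h₂ => simp [mul_add, h₁, h₂, add_smul]
    | tmul u v =>
      simp [e12, e23, smul_smul]

lemma contractFst_contractFst_aybe {r : A ⊗[k] A} (hskew : TensorProduct.comm k A A r = -r) :
    contractFst A b (contractFst (A ⊗[k] A) a
        (e12 k A r * e13 k A r + e13 k A r * e23 k A r - e23 k A r * e12 k A r)) =
      Fr r a * Fr r b -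
        Fr r ((b ∘ₗ LinearMap.mulRight k (Fr r a)) + (a ∘ₗ LinearMap.mulLeft k (Fr r b))) := by
  rw [map_sub, map_add, map_sub, map_add, contractFst_e12_mul_e13, contractFst_e13_mul_e23,
    contractFst_e23_mul_e12, hskew]
  simp only [Fr_eq_contractFst, map_neg, LinearMap.mulLeft_neg, LinearMap.comp_neg, map_add,
    LinearMap.add_apply, LinearMap.neg_apply]
  abel

end YangBaxter

theorem stmt11 {k A : Type} [Field k]
    [Ring A] [Algebra k A] [FiniteDimensional k A]
    (r : A ⊗[k] A) (hskew : TensorProduct.comm k A A r = -r) :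
    (e12 k A r * e13 k A r + e13 k A r * e23 k A r - e23 k A r * e12 k A r = 0) ↔
      (∀ a b : Module.Dual k A,
        Fr r a * Fr r b =
          Fr r ((b ∘ₗ LinearMap.mulRight k (Fr r a)) +
            (a ∘ₗ LinearMap.mulLeft k (Fr r b)))) := by
  simp_rw [← forall_contractFst_eq_zero_iff, contractFst_contractFst_aybe _ _ hskew, sub_eq_zero]
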